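/- For the Poisson bi-vector P on ℝ³ with P^{12} = x²y, P^{13} = -x(xz+1), P^{23} = xyz, define Γ₂'(P)^{im} = ∑ (∂²P^{ij}/∂x^k∂x^ℓ)(∂²P^{km}/∂x^{k'}∂x^{ℓ'})(∂P^{k'ℓ}/∂x^{m'})(∂P^{m'ℓ'}/∂x^j) and let Γ₂(P)^{im} = ½(Γ₂'(P)^{im} - Γ₂'(P)^{mi}) be its antisymmetrization. Then Γ₂(P)^{12} = x⁵y, Γ₂(P)^{13} = x⁴(xz+2), Γ₂(P)^{23} = -2x³y. -/

import Mathlib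

/-! The entries of `P` are `0` and `±` the three polynomials `x²y`, `-x(xz+1)`, `xyz`, placed in
a fixed skew-symmetric pattern, and `∂ₖ` commutes with that pattern. Hence every first and second
derivative of `P` is the skew matrix built from the gradients resp. Hessians of these three
polynomials, which are computed once; substituting them turns `Γ₂'` into an explicit polynomial
sum over `3⁶` index tuples that `ring` evaluates. -/

/-- Partial derivative in the `i`-th coordinate direction on `ℝ³ = Fin 3 → ℝ`. -/
noncomputable def pd (i : Fin 3) (f : (Fin 3 → ℝ) → ℝ) : (Fin 3 → ℝ) → ℝ :=
  fun x => fderiv ℝ f x (Pi.single i 1)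

/-- The specific bi-vector on `ℝ³` with `P^{12} = x²y`, `P^{13} = -x(xz+1)`,
`P^{23} = xyz`. -/
noncomputable def Pmat : (Fin 3 → ℝ) → Matrix (Fin 3) (Fin 3) ℝ := fun x =>
  !![0, x 0 ^ 2 * x 1, -(x 0 * (x 0 * x 2 + 1));
     -(x 0 ^ 2 * x 1), 0, x 0 * x 1 * x 2;
     x 0 * (x 0 * x 2 + 1), -(x 0 * x 1 * x 2), 0]

/-- The entries of `Pmat` as functions on `ℝ³`. -/
noncomputable def Pf (i j : Fin 3) : (Fin 3 → ℝ) → ℝ := fun x => Pmat x i j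

/-- The second (non-antisymmetrized) Kontsevich tetrahedral operator
`Γ₂'(P)^{im} = ∑ ∂²P^{ij}/∂x^k∂x^ℓ · ∂²P^{km}/∂x^{k'}∂x^{ℓ'} · ∂P^{k'ℓ}/∂x^{m'} · ∂P^{m'ℓ'}/∂x^j`. -/
noncomputable def Γ₂' (i m : Fin 3) : (Fin 3 → ℝ) → ℝ := fun x =>
  ∑ j, ∑ k, ∑ l, ∑ k', ∑ l', ∑ m',
    pd k (pd l (Pf i j)) x * pd k' (pd l' (Pf k m)) x * pd m' (Pf k' l) x * pd j (Pf m' l') x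

/-- The antisymmetrization `Γ₂ = ½(Γ₂'(1,2) − Γ₂'(2,1))`. -/
noncomputable def Γ₂ (i m : Fin 3) : (Fin 3 → ℝ) → ℝ := fun x =>
  (Γ₂' i m x - Γ₂' m i x) / 2

section PartialDerivative

variable {f g : (Fin 3 → ℝ) → ℝ}

lemma pd_const (k : Fin 3) (c : ℝ) : pd k (fun _ => c) = fun _ => 0 := by
  ext; simp [pd]

lemma pd_coord (k i : Fin 3) : pd k (fun x => x i) = fun _ => (Pi.single k 1 : Fin 3 → ℝ) i := by
  ext x
  simp only [pd]
  rw [show (fun y : Fin 3 → ℝ => y i) = ContinuousLinearMap.proj (R := ℝ) i from rfl,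
    ContinuousLinearMap.fderiv]
  rfl

lemma pd_neg (k : Fin 3) : pd k (fun x => -f x) = fun x => -pd k f x := by
  ext; simp [pd, fderiv_fun_neg]

lemma pd_add (k : Fin 3) (hf : Differentiable ℝ f) (hg : Differentiable ℝ g) :
    pd k (fun x => f x + g x) = fun x => pd k f x + pd k g x := by
  ext x; simp [pd, fderiv_fun_add (hf x) (hg x)]

lemma pd_mul (k : Fin 3) (hf : Differentiable ℝ f) (hg : Differentiable ℝ g) :
    pd k (fun x => f x * g x) = fun x => pd k f x * g x + f x * pd k g x := by
  ext x; simp [pd, fderiv_fun_mul (hf x) (hg x)]; ring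

lemma pd_pow (k : Fin 3) (n : ℕ) (hf : Differentiable ℝ f) :
    pd k (fun x => f x ^ n) = fun x => n * f x ^ (n - 1) * pd k f x := by
  ext x; simp [pd, fderiv_fun_pow n (hf x)]

end PartialDerivative

def skew3 (a b c : ℝ) : Matrix (Fin 3) (Fin 3) ℝ :=
  !![0, a, b; -a, 0, c; -b, -c, 0]

lemma pd_skew3 (k i j : Fin 3) (a b c : (Fin 3 → ℝ) → ℝ) :
    pd k (fun x => skew3 (a x) (b x) (c x) i j)
      = fun x => skew3 (pd k a x) (pd k b x) (pd k c x) i j := by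
  fin_cases i <;> fin_cases j <;> simp [skew3, pd_neg, pd_const]

def P₁₂ : (Fin 3 → ℝ) → ℝ := fun x => x 0 ^ 2 * x 1

def P₁₃ : (Fin 3 → ℝ) → ℝ := fun x => -(x 0 * (x 0 * x 2 + 1))

def P₂₃ : (Fin 3 → ℝ) → ℝ := fun x => x 0 * x 1 * x 2

lemma Pf_eq_skew3 (i j : Fin 3) : Pf i j = fun x => skew3 (P₁₂ x) (P₁₃ x) (P₂₃ x) i j := by
  ext x; fin_cases i <;> fin_cases j <;> simp [Pf, Pmat, skew3, P₁₂, P₁₃, P₂₃]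

lemma pd_Pf (l i j : Fin 3) :
    pd l (Pf i j) = fun x => skew3 (pd l P₁₂ x) (pd l P₁₃ x) (pd l P₂₃ x) i j := by
  rw [Pf_eq_skew3, pd_skew3]

lemma pd_pd_Pf (k l i j : Fin 3) :
    pd k (pd l (Pf i j)) = fun x =>
      skew3 (pd k (pd l P₁₂) x) (pd k (pd l P₁₃) x) (pd k (pd l P₂₃) x) i j := by
  rw [pd_Pf, pd_skew3]

section Entries

attribute [local simp] pd_const pd_coord pd_neg

lemma pd_P₁₂ (k : Fin 3) : pd k P₁₂ = fun x => ![2 * x 0 * x 1, x 0 ^ 2, 0] k := by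
  ext x
  unfold P₁₂
  simp (disch := fun_prop) only [pd_mul, pd_pow, pd_coord]
  fin_cases k <;> simp

lemma pd_P₁₃ (k : Fin 3) : pd k P₁₃ = fun x => ![-(2 * x 0 * x 2 + 1), 0, -x 0 ^ 2] k := by
  ext x
  unfold P₁₃
  simp (disch := fun_prop) only [pd_neg, pd_mul, pd_add, pd_const, pd_coord]
  fin_cases k <;> simp <;> ring

lemma pd_P₂₃ (k : Fin 3) : pd k P₂₃ = fun x => ![x 1 * x 2, x 0 * x 2, x 0 * x 1] k := by
  ext x
  unfold P₂₃
  simp (disch := fun_prop) only [pd_mul, pd_coord]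
  fin_cases k <;> simp

lemma pd_pd_P₁₂ (k l : Fin 3) :
    pd k (pd l P₁₂) = fun x => !![2 * x 1, 2 * x 0, 0; 2 * x 0, 0, 0; 0, 0, 0] k l := by
  ext x
  rw [pd_P₁₂]
  fin_cases l <;> fin_cases k <;> simp (disch := fun_prop) [pd_mul, pd_pow, Pi.single_apply]

lemma pd_pd_P₁₃ (k l : Fin 3) :
    pd k (pd l P₁₃) = fun x => !![-(2 * x 2), 0, -(2 * x 0); 0, 0, 0; -(2 * x 0), 0, 0] k l := by
  ext x
  rw [pd_P₁₃]
  fin_cases l <;> fin_cases k <;> simp (disch := fun_prop) [pd_mul, pd_pow, pd_add, Pi.single_apply]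

lemma pd_pd_P₂₃ (k l : Fin 3) :
    pd k (pd l P₂₃) = fun x => !![0, x 2, x 1; x 2, 0, x 0; x 1, x 0, 0] k l := by
  ext x
  rw [pd_P₂₃]
  fin_cases l <;> fin_cases k <;> simp (disch := fun_prop) [pd_mul, Pi.single_apply]

end Entries

theorem Γ₂_components :
    ∀ x : Fin 3 → ℝ,
      Γ₂ 0 1 x = x 0 ^ 5 * x 1 ∧
      Γ₂ 0 2 x = x 0 ^ 4 * (x 0 * x 2 + 2) ∧
      Γ₂ 1 2 x = -2 * x 0 ^ 3 * x 1 := by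
  intro x
  -- the Hessians go first: once `pd_Pf` has rewritten an inner derivative they no longer match
  simp only [Γ₂, Γ₂', pd_pd_Pf, pd_pd_P₁₂, pd_pd_P₁₃, pd_pd_P₂₃]
  simp only [pd_Pf, pd_P₁₂, pd_P₁₃, pd_P₂₃]
  simp only [Fin.sum_univ_three, skew3, Matrix.of_apply, Matrix.cons_val', Matrix.cons_val_fin_one,
    Matrix.cons_val_zero, Matrix.cons_val_one, Matrix.cons_val, Fin.isValue, Nat.succ_eq_add_one,
    Nat.reduceAdd, neg_neg, neg_zero, mul_zero, zero_mul, mul_neg, neg_mul, zero_add, add_zero]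
  refine ⟨?_, ?_, ?_⟩ <;> ring
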